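/- Let A be a De Morgan poset and G a partial semi-tense operator on A with domain dom G. Let F be the dual of G, i.e., F(b) = (G(b'))' for all b with b' ∈ dom G. Then for every b with b' ∈ dom G and every nonempty proper down-set D of A, κ_D(F(b)) = ⨆{ κ_E(b) : E a nonempty proper down-set with D R_G E }, the supremum taken in M₂ (viewed as a complete lattice). -/

import Mathlib

/-- A down-set of a poset. -/
def IsDownSet {A : Type*} [PartialOrder A] (D : Set A) : Prop :=
  ∀ ⦃x y : A⦄, x ≤ y → y ∈ D → x ∈ D

/-- A nonempty proper down-set of a poset. -/
def IsProperDownSet {A : Type*} [PartialOrder A] (D : Set A) : Prop :=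
  D.Nonempty ∧ D ≠ Set.univ ∧ IsDownSet D

open Classical in
/-- `hD D a = false` iff `a ∈ D`. -/
noncomputable def hD {A : Type*} (D : Set A) (a : A) : Bool :=
  if a ∈ D then false else true

/-- `κ_D(a) = (h_D(a), h_D^∂(a))` where `h_D^∂(a) = ¬ h_D(a')`. -/
noncomputable def kappa {A : Type*} (neg : A → A) (D : Set A) (a : A) :
    Bool × Bool := (hD D a, ! hD D (neg a))

/-- The negation of the four-element De Morgan poset `M₂`: `(a,b)' = (¬b, ¬a)`. -/
def negM2 (m : Bool × Bool) : Bool × Bool := (! m.2, ! m.1)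

/-- The relation `R_G` on down-sets: `D R_G E` iff `κ_D(G x) ≤ κ_E(x)` for all `x ∈ dom G`. -/
def RG {A : Type*} (neg : A → A) (domG : Set A) (G : A → A) (D E : Set A) : Prop :=
  ∀ x ∈ domG, kappa neg D (G x) ≤ kappa neg E x

/-!
Unfolding `κ`, the relation `D R_G E` says exactly that `E ∩ dom G ⊆ G⁻¹(D)` and `F⁻¹(D) ⊆ E`.
The inequality `κ_E(b) ≤ κ_D(F b)` is the instance `x = b'` of `D R_G E`, transported by the
negation of `M₂`. Conversely, the down-closure of `F⁻¹(D)` is related to `D` (by P4) and contains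
`b` only if `F b ∈ D`, as `F` is monotone; adding `G⁻¹(D) ∩ dom G` keeps it related to `D` (by P2)
and puts `b'` in it whenever `G b' ∈ D`. These two down-sets realise the two coordinates of
`κ_D(F b)`.
-/

lemma negM2_antitone : Antitone negM2 := by
  rintro ⟨a, b⟩ ⟨c, d⟩ ⟨hac, hbd⟩
  revert hac hbd
  cases a <;> cases b <;> cases c <;> cases d <;> decide

section Kappa

variable {A : Type*} {neg : A → A} {domG : Set A} {G : A → A} {D E : Set A} {a c : A}

lemma kappa_fst_le_iff : (kappa neg D a).1 ≤ (kappa neg E c).1 ↔ (c ∈ E → a ∈ D) := by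
  by_cases ha : a ∈ D <;> by_cases hc : c ∈ E <;> simp [kappa, hD, ha, hc]

lemma kappa_snd_le_iff : (kappa neg D a).2 ≤ (kappa neg E c).2 ↔ (neg a ∈ D → neg c ∈ E) := by
  by_cases ha : neg a ∈ D <;> by_cases hc : neg c ∈ E <;> simp [kappa, hD, ha, hc]

lemma kappa_le_kappa_iff :
    kappa neg D a ≤ kappa neg E c ↔ (c ∈ E → a ∈ D) ∧ (neg a ∈ D → neg c ∈ E) :=
  Prod.le_def.trans (and_congr kappa_fst_le_iff kappa_snd_le_iff)

lemma kappa_neg (hinv : Function.Involutive neg) (D : Set A) (a : A) :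
    kappa neg D (neg a) = negM2 (kappa neg D a) := by
  simp [kappa, negM2, hinv a]

/-- `F⁻¹(D)` for the dual `F b = (G b')'` of `G`, which is defined where `b' ∈ dom G`. -/
def dualPreimage (neg : A → A) (domG : Set A) (G : A → A) (D : Set A) : Set A :=
  {y | neg y ∈ domG ∧ neg (G (neg y)) ∈ D}

lemma rg_iff (hinv : Function.Involutive neg) :
    RG neg domG G D E ↔
      (∀ x ∈ domG, x ∈ E → G x ∈ D) ∧ dualPreimage neg domG G D ⊆ E := by
  simp only [RG, kappa_le_kappa_iff]
  constructor
  · intro h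
    refine ⟨fun x hx => (h x hx).1, fun y ⟨hy, hFy⟩ => ?_⟩
    simpa only [hinv y] using (h (neg y) hy).2 hFy
  · rintro ⟨hGE, hFE⟩ x hx
    exact ⟨hGE x hx, fun hGx => hFE ⟨(hinv x).symm ▸ hx, by rwa [hinv x]⟩⟩

lemma kappa_le_kappa_dual (hinv : Function.Involutive neg) {b : A} (hb : neg b ∈ domG)
    (hR : RG neg domG G D E) : kappa neg E b ≤ kappa neg D (neg (G (neg b))) :=
  calc kappa neg E b = negM2 (kappa neg E (neg b)) := by rw [← kappa_neg hinv, hinv]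
    _ ≤ negM2 (kappa neg D (G (neg b))) := negM2_antitone (hR _ hb)
    _ = kappa neg D (neg (G (neg b))) := (kappa_neg hinv _ _).symm

end Kappa

section Order

variable {A : Type*} [PartialOrder A] {neg : A → A} {domG : Set A} {G : A → A} {D E : Set A}

lemma IsLowerSet.isDownSet {s : Set A} (h : IsLowerSet s) : IsDownSet s :=
  fun _ _ hxy hy => h hxy hy

lemma IsProperDownSet.bot_mem [OrderBot A] (hD : IsProperDownSet D) : ⊥ ∈ D :=
  let ⟨_, hd⟩ := hD.1
  hD.2.2 bot_le hd

lemma IsProperDownSet.top_notMem [OrderTop A] (hD : IsProperDownSet D) : ⊤ ∉ D :=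
  fun h => hD.2.1 (Set.eq_univ_of_forall fun _ => hD.2.2 le_top h)

lemma neg_top_eq_bot [BoundedOrder A] (hanti : Antitone neg) (hinv : Function.Involutive neg) :
    neg ⊤ = ⊥ :=
  le_bot_iff.1 (hinv ⊥ ▸ hanti (le_top : neg ⊥ ≤ ⊤))

lemma neg_G_neg_le (hanti : Antitone neg)
    (hP2 : ∀ x ∈ domG, ∀ y ∈ domG, x ≤ y → G x ≤ G y)
    {b t : A} (hb : neg b ∈ domG) (ht : neg t ∈ domG) (hbt : b ≤ t) :
    neg (G (neg b)) ≤ neg (G (neg t)) :=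
  hanti (hP2 _ ht _ hb (hanti hbt))

lemma G_mem_of_le_mem_dualPreimage (hDdown : IsDownSet D)
    (hP4 : ∀ x y : A, x ≤ y → x ∈ domG → neg y ∈ domG → G x ≤ neg (G (neg y)))
    {x t : A} (hx : x ∈ domG) (ht : t ∈ dualPreimage neg domG G D) (hxt : x ≤ t) : G x ∈ D :=
  hDdown (hP4 x t hxt hx ht.1) ht.2

lemma rg_lowerClosure_dualPreimage (hinv : Function.Involutive neg) (hDdown : IsDownSet D)
    (hP4 : ∀ x y : A, x ≤ y → x ∈ domG → neg y ∈ domG → G x ≤ neg (G (neg y))) :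
    RG neg domG G D (lowerClosure (dualPreimage neg domG G D)) := by
  refine (rg_iff hinv).2 ⟨fun x hx hxE => ?_, subset_lowerClosure⟩
  obtain ⟨t, ht, hxt⟩ := mem_lowerClosure.1 hxE
  exact G_mem_of_le_mem_dualPreimage hDdown hP4 hx ht hxt

lemma rg_lowerClosure_dualPreimage_union (hinv : Function.Involutive neg) (hDdown : IsDownSet D)
    (hP2 : ∀ x ∈ domG, ∀ y ∈ domG, x ≤ y → G x ≤ G y)
    (hP4 : ∀ x y : A, x ≤ y → x ∈ domG → neg y ∈ domG → G x ≤ neg (G (neg y))) :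
    RG neg domG G D (lowerClosure (dualPreimage neg domG G D ∪ {x ∈ domG | G x ∈ D})) := by
  refine (rg_iff hinv).2
    ⟨fun x hx hxE => ?_, Set.subset_union_left.trans subset_lowerClosure⟩
  obtain ⟨t, ht | ⟨ht, hGt⟩, hxt⟩ := mem_lowerClosure.1 hxE
  · exact G_mem_of_le_mem_dualPreimage hDdown hP4 hx ht hxt
  · exact hDdown (hP2 x hx t ht hxt) hGt

lemma IsProperDownSet.of_rg [BoundedOrder A] (hanti : Antitone neg)
    (hinv : Function.Involutive neg) (htop : ⊤ ∈ domG) (hG1 : G ⊤ = ⊤)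
    (hD : IsProperDownSet D) (hE : IsDownSet E) (hR : RG neg domG G D E) :
    IsProperDownSet E := by
  obtain ⟨hGE, hFE⟩ := (rg_iff hinv).1 hR
  have hnegtop := neg_top_eq_bot hanti hinv
  refine ⟨⟨neg ⊤, hFE ⟨by rwa [hinv], ?_⟩⟩, fun hEu => hD.top_notMem ?_, hE⟩
  · rw [hinv, hG1, hnegtop]
    exact hD.bot_mem
  · simpa only [hG1] using hGE ⊤ htop (hEu ▸ Set.mem_univ ⊤)

lemma kappa_dual_fst_le (hanti : Antitone neg) (hDdown : IsDownSet D)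
    (hP2 : ∀ x ∈ domG, ∀ y ∈ domG, x ≤ y → G x ≤ G y) {b : A} (hb : neg b ∈ domG) :
    (kappa neg D (neg (G (neg b)))).1 ≤
      (kappa neg (lowerClosure (dualPreimage neg domG G D)) b).1 := by
  refine kappa_fst_le_iff.2 fun hbE => ?_
  obtain ⟨t, ⟨ht, hFt⟩, hbt⟩ := mem_lowerClosure.1 hbE
  exact hDdown (neg_G_neg_le hanti hP2 hb ht hbt) hFt

lemma kappa_dual_snd_le (hinv : Function.Involutive neg) {b : A} (hb : neg b ∈ domG) :
    (kappa neg D (neg (G (neg b)))).2 ≤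
      (kappa neg (lowerClosure (dualPreimage neg domG G D ∪ {x ∈ domG | G x ∈ D})) b).2 := by
  refine kappa_snd_le_iff.2 fun hGb => subset_lowerClosure (Or.inr ⟨hb, ?_⟩)
  rwa [hinv] at hGb

end Order

theorem stmt_10_general {A : Type*} [PartialOrder A] [BoundedOrder A]
    (neg : A → A)
    (hanti : ∀ a b : A, a ≤ b → neg b ≤ neg a)
    (hinv : ∀ a : A, neg (neg a) = a)
    (domG : Set A) (G : A → A)
    (htop : (⊤ : A) ∈ domG)
    (hG1 : G ⊤ = ⊤)
    (hP2 : ∀ x ∈ domG, ∀ y ∈ domG, x ≤ y → G x ≤ G y)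
    (hP4 : ∀ x y : A, x ≤ y → x ∈ domG → neg y ∈ domG → G x ≤ neg (G (neg y)))
    (b : A) (hb : neg b ∈ domG)
    (D : Set A) (hDp : IsProperDownSet D) :
    kappa neg D (neg (G (neg b))) =
      sSup {m : Bool × Bool |
        ∃ E : Set A, IsProperDownSet E ∧ RG neg domG G D E ∧ m = kappa neg E b} := by
  have hDdown := hDp.2.2
  set E₁ := lowerClosure (dualPreimage neg domG G D)
  set E₂ := lowerClosure (dualPreimage neg domG G D ∪ {x ∈ domG | G x ∈ D})
  have hR₁ : RG neg domG G D E₁ := rg_lowerClosure_dualPreimage hinv hDdown hP4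
  have hR₂ : RG neg domG G D E₂ := rg_lowerClosure_dualPreimage_union hinv hDdown hP2 hP4
  have hE₁ := IsProperDownSet.of_rg hanti hinv htop hG1 hDp E₁.lower.isDownSet hR₁
  have hE₂ := IsProperDownSet.of_rg hanti hinv htop hG1 hDp E₂.lower.isDownSet hR₂
  refine le_antisymm ?_ (sSup_le ?_)
  · calc kappa neg D (neg (G (neg b))) ≤ kappa neg E₁ b ⊔ kappa neg E₂ b :=
          ⟨(kappa_dual_fst_le hanti hDdown hP2 hb).trans le_sup_left,
            (kappa_dual_snd_le hinv hb).trans le_sup_right⟩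
      _ ≤ _ := sup_le (le_sSup (by exact ⟨E₁, hE₁, hR₁, rfl⟩))
          (le_sSup (by exact ⟨E₂, hE₂, hR₂, rfl⟩))
  · rintro _ ⟨E, -, hR, rfl⟩
    exact kappa_le_kappa_dual hinv hb hR

/-- Representation of the dual `F = G^∂` of a partial semi-tense operator `G`:
for `b` with `b' ∈ dom G` and a nonempty proper down-set `D`,
`κ_D(F(b)) = ⨆ {κ_E(b) : D R_G E}` in `M₂`. -/
theorem stmt_10 {A : Type*} [PartialOrder A] [BoundedOrder A]
    (neg : A → A)
    (hanti : ∀ a b : A, a ≤ b → neg b ≤ neg a)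
    (hinv : ∀ a : A, neg (neg a) = a)
    (domG : Set A) (G : A → A)
    (hbot : (⊥ : A) ∈ domG) (htop : (⊤ : A) ∈ domG)
    (hG0 : G ⊥ = ⊥) (hG1 : G ⊤ = ⊤)
    (hP2 : ∀ x ∈ domG, ∀ y ∈ domG, x ≤ y → G x ≤ G y)
    (hP4 : ∀ x y : A, x ≤ y → x ∈ domG → neg y ∈ domG → G x ≤ neg (G (neg y)))
    (b : A) (hb : neg b ∈ domG)
    (D : Set A) (hDp : IsProperDownSet D) :
    kappa neg D (neg (G (neg b))) =
      sSup {m : Bool × Bool |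
        ∃ E : Set A, IsProperDownSet E ∧ RG neg domG G D E ∧ m = kappa neg E b} :=
  stmt_10_general neg hanti hinv domG G htop hG1 hP2 hP4 b hb D hDp
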